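/- Fix weights W, a sample index i with y_i ∈ {−1,1}, and set j = y_i; fix r ∈ {1,…,m}, λ ≥ 0, η > 0, and a batch I ⊆ {1,…,n} of size B ≥ 1 with i ∈ I. Let g = (1/B) Σ_{i'∈I} ∇_{w_{j,r}} L_{i'}(W) + λ·w_{j,r}, and define the SignSGD update w'_{j,r} = w_{j,r} − η·sgn(g), with sgn applied coordinatewise. Then ⟨w'_{j,r}, ξ_i⟩ = ⟨w_{j,r}, ξ_i⟩ + η Σ_{k∈B_i} sgn( ℓ_{j,i} σ'(⟨w_{j,r}, ξ_i⟩) ξ_i[k] − B λ w_{j,r}[k] ) · ξ_i[k] − α y_i η · sgn( Σ_{i'∈I} y_{i'} ℓ_{j,i'} [ σ'(⟨w_{j,r}, y_{i'}·v⟩) − α σ'(⟨w_{j,r}, ξ_{i'}⟩) ] − B λ w_{j,r}[1] ). -/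

import Mathlib

/-! Only the filter `w = w_{j,r}` moves, and for `j = ±1` the log-sum-exp in the loss sees it
only through `F_j`; hence
`∇_w L_{i'} = -ℓ_{j,i'} (σ'(⟨w, y_{i'} v⟩) y_{i'} v + σ'(⟨w, ξ_{i'}⟩) ξ_{i'})`.
Since `ξ_i` is supported on `{1} ∪ B_i`, the update of `⟨w, ξ_i⟩` only reads the signs of the
gradient at coordinate `1`, where every sample of the batch contributes, and at the coordinates
of `B_i`, where by disjointness only sample `i` does. Scaling by `B > 0` leaves signs unchanged. -/

open scoped RealInnerProductSpace

noncomputable section SignSGDNoise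

/-- Derivative of the polynomial ReLU activation `σ(z) = (max z 0)^q`. -/
def actD (q : ℕ) (z : ℝ) : ℝ := (q : ℝ) * (max z 0) ^ (q - 1)

/-- Output `F_j(W, x)` of the two-layer CNN on the input with patches `x₁, x₂`. -/
def cnnOut (q : ℕ) {d m : ℕ} (W : ℝ → Fin m → EuclideanSpace ℝ (Fin d))
    (j : ℝ) (x1 x2 : EuclideanSpace ℝ (Fin d)) : ℝ :=
  ∑ r : Fin m, ((max ⟪W j r, x1⟫ 0) ^ q + (max ⟪W j r, x2⟫ 0) ^ q)

/-- Cross-entropy loss of the CNN on a sample with label `y` and patches `x₁, x₂`. -/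
def cnnLoss (q : ℕ) {d m : ℕ} (W : ℝ → Fin m → EuclideanSpace ℝ (Fin d))
    (y : ℝ) (x1 x2 : EuclideanSpace ℝ (Fin d)) : ℝ :=
  -Real.log (Real.exp (cnnOut q W y x1 x2) /
    (Real.exp (cnnOut q W 1 x1 x2) + Real.exp (cnnOut q W (-1) x1 x2)))

/-- The quantity `ℓ_j = 𝟙[y = j] − exp(F_j)/(exp F₁ + exp F₋₁)` for a sample. -/
def ellC (q : ℕ) {d m : ℕ} (W : ℝ → Fin m → EuclideanSpace ℝ (Fin d))
    (j y : ℝ) (x1 x2 : EuclideanSpace ℝ (Fin d)) : ℝ :=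
  (if y = j then (1 : ℝ) else 0) - Real.exp (cnnOut q W j x1 x2) /
    (Real.exp (cnnOut q W 1 x1 x2) + Real.exp (cnnOut q W (-1) x1 x2))

/-- Replace the filter `w_{j,r}` of `W` by `w`, keeping all other filters fixed. -/
def updW {d m : ℕ} (W : ℝ → Fin m → EuclideanSpace ℝ (Fin d)) (j : ℝ) (r : Fin m)
    (w : EuclideanSpace ℝ (Fin d)) : ℝ → Fin m → EuclideanSpace ℝ (Fin d) :=
  Function.update W j (Function.update (W j) r w)

/-- The coordinatewise sign of a vector. -/
def signVec {d : ℕ} (g : EuclideanSpace ℝ (Fin d)) : EuclideanSpace ℝ (Fin d) :=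
  WithLp.toLp 2 (fun k => Real.sign (g k))

open Filter Asymptotics Topology

theorem hasDerivAt_max_zero_pow {q : ℕ} (hq : 2 ≤ q) (z : ℝ) :
    HasDerivAt (fun t : ℝ => max t 0 ^ q) (actD q z) z := by
  have hq0 : q ≠ 0 := by omega
  have hq1 : q - 1 ≠ 0 := by omega
  rcases lt_trichotomy z 0 with hz | rfl | hz
  · have hzero : (fun t : ℝ => max t 0 ^ q) =ᶠ[𝓝 z] fun _ => 0 := by
      filter_upwards [Iio_mem_nhds hz] with t ht
      rw [max_eq_right (le_of_lt ht), zero_pow hq0]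
    simpa [actD, max_eq_right hz.le, zero_pow hq1] using
      (hasDerivAt_const z (0 : ℝ)).congr_of_eventuallyEq hzero
  · rw [hasDerivAt_iff_isLittleO_nhds_zero]
    simp only [actD, max_self, zero_pow hq0, zero_pow hq1, zero_add, sub_zero, mul_zero, smul_zero]
    refine (IsBigO.of_bound 1 (Eventually.of_forall fun t => ?_)).trans_isLittleO
      (isLittleO_pow_id (by omega : 1 < q))
    rw [one_mul, norm_pow, norm_pow, Real.norm_eq_abs, Real.norm_eq_abs,
      abs_of_nonneg (le_max_right t 0)]
    exact pow_le_pow_left₀ (le_max_right t 0) (max_le (le_abs_self t) (abs_nonneg t)) q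
  · have hpow : (fun t : ℝ => max t 0 ^ q) =ᶠ[𝓝 z] fun t => t ^ q := by
      filter_upwards [Ioi_mem_nhds hz] with t ht
      rw [max_eq_left (le_of_lt ht)]
    simpa [actD, max_eq_left hz.le] using (hasDerivAt_pow q z).congr_of_eventuallyEq hpow

section NormedSpace

variable {E : Type*} [NormedAddCommGroup E] [NormedSpace ℝ E]

theorem HasFDerivAt.log_exp_add_exp {f g : E → ℝ} {f' g' : E →L[ℝ] ℝ} {x : E}
    (hf : HasFDerivAt f f' x) (hg : HasFDerivAt g g' x) :
    HasFDerivAt (fun w => Real.log (Real.exp (f w) + Real.exp (g w)))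
      ((Real.exp (f x) / (Real.exp (f x) + Real.exp (g x))) • f'
        + (Real.exp (g x) / (Real.exp (f x) + Real.exp (g x))) • g') x := by
  refine ((hf.exp.add hg.exp).log (add_pos (Real.exp_pos _) (Real.exp_pos _)).ne').congr_fderiv ?_
  simp only [Pi.add_apply, smul_add, smul_smul, div_eq_inv_mul]

end NormedSpace

section InnerProductSpace

variable {E : Type*} [NormedAddCommGroup E] [InnerProductSpace ℝ E]

theorem hasFDerivAt_max_inner_pow {q : ℕ} (hq : 2 ≤ q) (x u : E) :
    HasFDerivAt (fun w : E => max ⟪w, x⟫ 0 ^ q) (actD q ⟪u, x⟫ • innerSL ℝ x) u := by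
  have hinner : HasFDerivAt (fun w : E => ⟪w, x⟫) (innerSL ℝ x) u :=
    (innerSL ℝ x).hasFDerivAt.congr_of_eventuallyEq
      (Eventually.of_forall fun w => real_inner_comm x w)
  exact (hasDerivAt_max_zero_pow hq _).comp_hasFDerivAt u hinner

theorem HasFDerivAt.hasGradientAt_of_innerSL [CompleteSpace E] {f : E → ℝ} {v u : E}
    (h : HasFDerivAt f (innerSL ℝ v) u) : HasGradientAt f v u :=
  hasGradientAt_iff_hasFDerivAt.2 h

end InnerProductSpace

theorem Real.sign_mul_of_pos {c : ℝ} (hc : 0 < c) (t : ℝ) : Real.sign (c * t) = Real.sign t := by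
  rcases lt_trichotomy t 0 with ht | rfl | ht
  · rw [Real.sign_of_neg ht, Real.sign_of_neg (mul_neg_of_pos_of_neg hc ht)]
  · rw [mul_zero]
  · rw [Real.sign_of_pos ht, Real.sign_of_pos (mul_pos hc ht)]

theorem Real.sign_inv_mul_neg_add {c : ℝ} (hc : 0 < c) (t l u : ℝ) :
    Real.sign (c⁻¹ * -t + l * u) = -Real.sign (t - c * l * u) := by
  rw [← Real.sign_neg, ← Real.sign_mul_of_pos hc, mul_add, mul_inv_cancel_left₀ hc.ne']
  ring_nf

section CNN

variable {d m : ℕ} (q : ℕ) (W : ℝ → Fin m → EuclideanSpace ℝ (Fin d)) (r : Fin m)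
  (x1 x2 : EuclideanSpace ℝ (Fin d))

theorem updW_self (j : ℝ) : updW W j r (W j r) = W := by
  simp only [updW, Function.update_eq_self]

theorem cnnOut_updW_of_ne {j j' : ℝ} (h : j' ≠ j) (w : EuclideanSpace ℝ (Fin d)) :
    cnnOut q (updW W j r w) j' x1 x2 = cnnOut q W j' x1 x2 := by
  simp only [cnnOut, updW, Function.update_of_ne h]

theorem cnnOut_updW_self (j : ℝ) (w : EuclideanSpace ℝ (Fin d)) :
    cnnOut q (updW W j r w) j x1 x2 =
      ∑ r' ∈ Finset.univ.erase r, (max ⟪W j r', x1⟫ 0 ^ q + max ⟪W j r', x2⟫ 0 ^ q)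
        + (max ⟪w, x1⟫ 0 ^ q + max ⟪w, x2⟫ 0 ^ q) := by
  rw [cnnOut, ← Finset.sum_erase_add _ _ (Finset.mem_univ r)]
  simp only [updW, Function.update_self]
  congr 1
  exact Finset.sum_congr rfl fun r' hr' => by
    rw [Function.update_of_ne (Finset.ne_of_mem_erase hr')]

variable {q} in
theorem hasFDerivAt_cnnOut_updW (hq : 2 ≤ q) (j j' : ℝ) :
    HasFDerivAt (fun w => cnnOut q (updW W j r w) j' x1 x2)
      (if j' = j then innerSL ℝ (actD q ⟪W j r, x1⟫ • x1 + actD q ⟪W j r, x2⟫ • x2) else 0)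
      (W j r) := by
  split_ifs with h
  · subst h
    simp_rw [cnnOut_updW_self]
    refine (((hasFDerivAt_max_inner_pow hq x1 _).add
      (hasFDerivAt_max_inner_pow hq x2 _)).const_add _).congr_fderiv ?_
    rw [map_add, map_smul, map_smul]
  · simp_rw [cnnOut_updW_of_ne q W r x1 x2 h]
    exact hasFDerivAt_const _ _

theorem cnnLoss_eq_log_sum_exp_sub (y : ℝ) :
    cnnLoss q W y x1 x2 =
      Real.log (Real.exp (cnnOut q W 1 x1 x2) + Real.exp (cnnOut q W (-1) x1 x2))
        - cnnOut q W y x1 x2 := by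
  rw [cnnLoss, Real.log_div (Real.exp_ne_zero _) (add_pos (Real.exp_pos _) (Real.exp_pos _)).ne',
    Real.log_exp]
  ring

variable {q} in
theorem hasGradientAt_cnnLoss_updW (hq : 2 ≤ q) {j : ℝ} (hj : j = 1 ∨ j = -1) (y : ℝ) :
    HasGradientAt (fun w => cnnLoss q (updW W j r w) y x1 x2)
      ((-ellC q W j y x1 x2) • (actD q ⟪W j r, x1⟫ • x1 + actD q ⟪W j r, x2⟫ • x2)) (W j r) := by
  simp_rw [cnnLoss_eq_log_sum_exp_sub]
  have h := ((hasFDerivAt_cnnOut_updW W r x1 x2 hq j 1).log_exp_add_exp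
    (hasFDerivAt_cnnOut_updW W r x1 x2 hq j (-1))).sub (hasFDerivAt_cnnOut_updW W r x1 x2 hq j y)
  rw [updW_self] at h
  refine (h.congr_fderiv ?_).hasGradientAt_of_innerSL
  have hne : (-1 : ℝ) ≠ 1 := by norm_num
  by_cases hy : y = j <;> rcases hj with rfl | rfl <;>
    simp only [ellC, hy, hne, hne.symm, ↓reduceIte, smul_zero, add_zero, zero_add, sub_zero,
      map_add, map_smul] <;>
    module

end CNN

theorem inner_sub_smul_signVec {d : ℕ} (w g x : EuclideanSpace ℝ (Fin d)) (η : ℝ) :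
    ⟪w - η • signVec g, x⟫ = ⟪w, x⟫ - η * ∑ k, Real.sign (g k) * x k := by
  rw [inner_sub_left, real_inner_smul_left, signVec]
  simp only [PiLp.inner_apply, RCLike.inner_apply, Real.ringHom_apply, mul_comm]

theorem Fintype.sum_eq_add_sum_of_forall_notMem_insert {ι M : Type*} [Fintype ι] [DecidableEq ι]
    [AddCommMonoid M] {f : ι → M} {s : Finset ι} {a : ι} (ha : a ∉ s)
    (hf : ∀ k ∉ insert a s, f k = 0) : ∑ k, f k = f a + ∑ k ∈ s, f k := by
  rw [← Finset.sum_insert ha]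
  exact (Finset.sum_subset (Finset.subset_univ _) fun k _ hk => hf k hk).symm

section Minibatch

variable {d n : ℕ} [NeZero d] {y : Fin n → ℝ} {ξ : Fin n → EuclideanSpace ℝ (Fin d)}
  {I : Finset (Fin n)} (s a b : Fin n → ℝ)

theorem sum_neg_smul_signal_add_noise_apply_of_ne_zero {i : Fin n} (hiI : i ∈ I) {k : Fin d}
    (hk : k ≠ 0) (hξk : ∀ i' ≠ i, ξ i' k = 0) :
    (∑ i' ∈ I, (-s i') • (a i' • (y i' • EuclideanSpace.single 0 1) + b i' • ξ i')
      : EuclideanSpace ℝ (Fin d)) k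
      = -(s i * b i * ξ i k) := by
  rw [WithLp.ofLp_sum, Finset.sum_apply, Finset.sum_eq_single_of_mem i hiI]
  · simp [hk, mul_assoc]
  · intro i' _ hi'
    simp [hk, hξk i' hi']

theorem sum_neg_smul_signal_add_noise_apply_zero {α : ℝ} (hξ1 : ∀ i, ξ i 0 = -α * y i) :
    (∑ i' ∈ I, (-s i') • (a i' • (y i' • EuclideanSpace.single 0 1) + b i' • ξ i')
      : EuclideanSpace ℝ (Fin d)) 0
      = -∑ i' ∈ I, y i' * s i' * (a i' - α * b i') := by
  rw [WithLp.ofLp_sum, Finset.sum_apply, ← Finset.sum_neg_distrib]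
  refine Finset.sum_congr rfl fun i' _ => ?_
  simp only [smul_add, neg_smul, PiLp.add_apply, PiLp.neg_apply, PiLp.smul_apply,
    PiLp.single_eq_same, smul_eq_mul, mul_one, hξ1]
  ring

end Minibatch

theorem signsgd_noise_memorization_update_general
    (d m n q : ℕ) [NeZero d] (hq : 3 ≤ q)
    (α : ℝ)
    (y : Fin n → ℝ) (hy : ∀ i, y i = 1 ∨ y i = -1)
    (Bs : Fin n → Finset (Fin d))
    (hB1 : ∀ i, (0 : Fin d) ∉ Bs i)
    (hBdisj : ∀ i i', i ≠ i' → Disjoint (Bs i) (Bs i'))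
    (ξ : Fin n → EuclideanSpace ℝ (Fin d))
    (hξ1 : ∀ i, ξ i 0 = -α * y i)
    (hξ0 : ∀ i, ∀ k : Fin d, k ≠ 0 → k ∉ Bs i → ξ i k = 0)
    (W : ℝ → Fin m → EuclideanSpace ℝ (Fin d))
    (i : Fin n) (r : Fin m)
    (lam : ℝ) (η : ℝ)
    (I : Finset (Fin n)) (hiI : i ∈ I) :
    let v : EuclideanSpace ℝ (Fin d) := EuclideanSpace.single 0 1
    let g : EuclideanSpace ℝ (Fin d) :=
      (I.card : ℝ)⁻¹ •
        (∑ i' ∈ I,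
          gradient (fun w => cnnLoss q (updW W (y i) r w) (y i') (y i' • v) (ξ i')) (W (y i) r))
      + lam • W (y i) r
    let w' : EuclideanSpace ℝ (Fin d) := W (y i) r - η • signVec g
    ⟪w', ξ i⟫ = ⟪W (y i) r, ξ i⟫
      + η * ∑ k ∈ Bs i,
          Real.sign (ellC q W (y i) (y i) (y i • v) (ξ i) * actD q ⟪W (y i) r, ξ i⟫ * ξ i k
              - I.card * lam * W (y i) r k) * ξ i k
      - α * y i * η * Real.sign
          ((∑ i' ∈ I, y i' * ellC q W (y i) (y i') (y i' • v) (ξ i') *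
              (actD q ⟪W (y i) r, y i' • v⟫ - α * actD q ⟪W (y i) r, ξ i'⟫))
            - I.card * lam * W (y i) r 0) := by
  intro v g w'
  have hB : (0 : ℝ) < I.card := Nat.cast_pos.2 (Finset.card_pos.2 ⟨i, hiI⟩)
  have hgrad := fun i' =>
    (hasGradientAt_cnnLoss_updW W r (y i' • v) (ξ i') (show 2 ≤ q by omega) (hy i) (y i')).gradient
  set ℓ : Fin n → ℝ := fun i' => ellC q W (y i) (y i') (y i' • v) (ξ i')
  set a1 : Fin n → ℝ := fun i' => actD q ⟪W (y i) r, y i' • v⟫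
  set a2 : Fin n → ℝ := fun i' => actD q ⟪W (y i) r, ξ i'⟫
  have hg : ∀ k, g k = (I.card : ℝ)⁻¹ * (∑ i' ∈ I, (-ℓ i') • (a1 i' • (y i' • v) + a2 i' • ξ i')
      : EuclideanSpace ℝ (Fin d)) k + lam * W (y i) r k := fun k => by
    simp only [g, hgrad, PiLp.add_apply, PiLp.smul_apply, smul_eq_mul]
    rfl
  have hsign_B : ∀ k ∈ Bs i, Real.sign (g k) * ξ i k
      = -(Real.sign (ℓ i * a2 i * ξ i k - I.card * lam * W (y i) r k) * ξ i k) := fun k hk => by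
    have hk0 : k ≠ 0 := ne_of_mem_of_not_mem hk (hB1 i)
    have hξk : ∀ i' ≠ i, ξ i' k = 0 := fun i' hi' =>
      hξ0 i' k hk0 (Finset.disjoint_left.1 (hBdisj i i' hi'.symm) hk)
    rw [hg, sum_neg_smul_signal_add_noise_apply_of_ne_zero _ _ _ hiI hk0 hξk,
      Real.sign_inv_mul_neg_add hB, neg_mul]
  have hsign_0 : Real.sign (g 0)
      = -Real.sign (∑ i' ∈ I, y i' * ℓ i' * (a1 i' - α * a2 i') - I.card * lam * W (y i) r 0) := by
    rw [hg, sum_neg_smul_signal_add_noise_apply_zero _ _ _ hξ1, Real.sign_inv_mul_neg_add hB]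
  have hsupp : ∀ k ∉ insert 0 (Bs i), Real.sign (g k) * ξ i k = 0 := fun k hk => by
    rw [Finset.mem_insert, not_or] at hk
    rw [hξ0 i k hk.1 hk.2, mul_zero]
  rw [inner_sub_smul_signVec, Fintype.sum_eq_add_sum_of_forall_notMem_insert (hB1 i) hsupp,
    Finset.sum_congr rfl hsign_B, Finset.sum_neg_distrib, hsign_0, hξ1]
  ring

/-- effect of one SignSGD step (with `j = y_i`, `i ∈ I`)
`w' = w_{j,r} − η·sgn(g)`, `g = (1/B) Σ_{i'∈I} ∇_{w_{j,r}} L_{i'}(W) + λ·w_{j,r}`, on the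
noise-memorization quantity `⟨w_{j,r}, ξ_i⟩`. -/
theorem signsgd_noise_memorization_update
    (d m n q : ℕ) [NeZero d] (hd : 2 ≤ d) (hm : 1 ≤ m) (hq : 3 ≤ q)
    (α : ℝ) (hα0 : 0 < α) (hα1 : α < 1)
    (y : Fin n → ℝ) (hy : ∀ i, y i = 1 ∨ y i = -1)
    (Bs : Fin n → Finset (Fin d))
    (hB1 : ∀ i, (0 : Fin d) ∉ Bs i)
    (hBdisj : ∀ i i', i ≠ i' → Disjoint (Bs i) (Bs i'))
    (ξ : Fin n → EuclideanSpace ℝ (Fin d))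
    (hξ1 : ∀ i, ξ i 0 = -α * y i)
    (hξ0 : ∀ i, ∀ k : Fin d, k ≠ 0 → k ∉ Bs i → ξ i k = 0)
    (W : ℝ → Fin m → EuclideanSpace ℝ (Fin d))
    (i : Fin n) (r : Fin m)
    (lam : ℝ) (hlam : 0 ≤ lam) (η : ℝ) (hη : 0 < η)
    (I : Finset (Fin n)) (hI : 1 ≤ I.card) (hiI : i ∈ I) :
    let v : EuclideanSpace ℝ (Fin d) := EuclideanSpace.single 0 1
    let g : EuclideanSpace ℝ (Fin d) :=
      (I.card : ℝ)⁻¹ •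
        (∑ i' ∈ I,
          gradient (fun w => cnnLoss q (updW W (y i) r w) (y i') (y i' • v) (ξ i')) (W (y i) r))
      + lam • W (y i) r
    let w' : EuclideanSpace ℝ (Fin d) := W (y i) r - η • signVec g
    ⟪w', ξ i⟫ = ⟪W (y i) r, ξ i⟫
      + η * ∑ k ∈ Bs i,
          Real.sign (ellC q W (y i) (y i) (y i • v) (ξ i) * actD q ⟪W (y i) r, ξ i⟫ * ξ i k
              - I.card * lam * W (y i) r k) * ξ i k
      - α * y i * η * Real.sign
          ((∑ i' ∈ I, y i' * ellC q W (y i) (y i') (y i' • v) (ξ i') *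
              (actD q ⟪W (y i) r, y i' • v⟫ - α * actD q ⟪W (y i) r, ξ i'⟫))
            - I.card * lam * W (y i) r 0) :=
  signsgd_noise_memorization_update_general d m n q hq α y hy Bs hB1 hBdisj ξ hξ1 hξ0 W i r lam η I
    hiI

end SignSGDNoise
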